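/- arXiv:2501.14568 — 3 statements merged into one kernel-verified Lean document; each statement's English description precedes it below -/
import Mathlib

section
/- Conflict-graph penalty exactness: let C be the adjacency matrix of a graph on n vertices (symmetric, binary, zero diagonal) and suppose there exists a feasible z ∈ Z with z^T C z = 0. If ω > ‖c‖₁, then every minimizer z* of z ↦ c^T z + ω·z^T C z over Z satisfies z*^T C z* = 0 (i.e., the chosen set of vertices is an independent set), and the minimum value equals min over conflict-free z ∈ Z of c^T z. -/
open Matrix

/-- Conflict-graph penalty exactness. -/
theorem conflict_penalty_exact {n : ℕ}
    (Z : Finset (Fin n → ℝ)) (hZ : Z.Nonempty)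
    (hbin : ∀ z ∈ Z, ∀ i, z i = 0 ∨ z i = 1)
    (c : Fin n → ℝ) (C : Matrix (Fin n) (Fin n) ℝ)
    (hsym : C.IsSymm) (hC : ∀ i j, C i j = 0 ∨ C i j = 1) (hdiag : ∀ i, C i i = 0)
    (ω : ℝ) (hω : ω > ∑ i, |c i|)
    (hfeas : ∃ z ∈ Z, z ⬝ᵥ C.mulVec z = 0) :
    (∀ z ∈ Z,
      (∀ z' ∈ Z, c ⬝ᵥ z + ω * (z ⬝ᵥ C.mulVec z) ≤ c ⬝ᵥ z' + ω * (z' ⬝ᵥ C.mulVec z')) →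
      z ⬝ᵥ C.mulVec z = 0) ∧
    (Z.inf' hZ fun z => c ⬝ᵥ z + ω * (z ⬝ᵥ C.mulVec z)) =
      sInf {v : ℝ | ∃ z ∈ Z, z ⬝ᵥ C.mulVec z = 0 ∧ v = c ⬝ᵥ z} := by
  have habs : (0:ℝ) ≤ ∑ i, |c i| := Finset.sum_nonneg fun i _ => abs_nonneg _
  have hωpos : (0:ℝ) < ω := lt_of_le_of_lt habs hω
  have hterm : ∀ z ∈ Z, ∀ p : Fin n × Fin n,
      z p.1 * (C p.1 p.2 * z p.2) = 0 ∨ z p.1 * (C p.1 p.2 * z p.2) = 1 := by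
    intro z hz p
    rcases hbin z hz p.1 with h1 | h1 <;> rcases hC p.1 p.2 with h2 | h2 <;>
      rcases hbin z hz p.2 with h3 | h3 <;> simp [h1, h2, h3]
  have hqsum : ∀ z : Fin n → ℝ,
      z ⬝ᵥ C.mulVec z = ∑ p : Fin n × Fin n, z p.1 * (C p.1 p.2 * z p.2) := by
    intro z
    rw [Fintype.sum_prod_type]
    simp [dotProduct, Matrix.mulVec, dotProduct, Finset.mul_sum]
  have hq0 : ∀ z ∈ Z, 0 ≤ z ⬝ᵥ C.mulVec z := by
    intro z hz
    rw [hqsum]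
    exact Finset.sum_nonneg fun p _ => by rcases hterm z hz p with h | h <;> simp [h]
  have hq1 : ∀ z ∈ Z, z ⬝ᵥ C.mulVec z ≠ 0 → 1 ≤ z ⬝ᵥ C.mulVec z := by
    intro z hz hne
    rw [hqsum] at hne ⊢
    have : ∃ p : Fin n × Fin n, z p.1 * (C p.1 p.2 * z p.2) ≠ 0 := by
      by_contra h
      push_neg at h
      exact hne (Finset.sum_eq_zero fun p _ => h p)
    obtain ⟨p, hp⟩ := this
    have hp1 : z p.1 * (C p.1 p.2 * z p.2) = 1 := (hterm z hz p).resolve_left hp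
    calc (1:ℝ) = z p.1 * (C p.1 p.2 * z p.2) := hp1.symm
      _ ≤ ∑ p : Fin n × Fin n, z p.1 * (C p.1 p.2 * z p.2) :=
        Finset.single_le_sum (f := fun q : Fin n × Fin n => z q.1 * (C q.1 q.2 * z q.2))
          (fun q _ => by rcases hterm z hz q with h | h <;> simp [h])
          (Finset.mem_univ p)
  have hdiff : ∀ z ∈ Z, ∀ z' ∈ Z, c ⬝ᵥ z' - c ⬝ᵥ z ≤ ∑ i, |c i| := by
    intro z hz z' hz'
    have : c ⬝ᵥ z' - c ⬝ᵥ z = ∑ i, c i * (z' i - z i) := by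
      simp [dotProduct, ← Finset.sum_sub_distrib, mul_sub]
    rw [this]
    refine Finset.sum_le_sum fun i _ => ?_
    calc c i * (z' i - z i) ≤ |c i * (z' i - z i)| := le_abs_self _
      _ = |c i| * |z' i - z i| := abs_mul _ _
      _ ≤ |c i| * 1 := by
          refine mul_le_mul_of_nonneg_left ?_ (abs_nonneg _)
          rcases hbin z' hz' i with h1 | h1 <;> rcases hbin z hz i with h2 | h2 <;>
            simp [h1, h2]
      _ = |c i| := mul_one _
  have part1 : ∀ z ∈ Z,
      (∀ z' ∈ Z, c ⬝ᵥ z + ω * (z ⬝ᵥ C.mulVec z) ≤ c ⬝ᵥ z' + ω * (z' ⬝ᵥ C.mulVec z')) →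
      z ⬝ᵥ C.mulVec z = 0 := by
    intro z hz hmin
    by_contra hne
    obtain ⟨z0, hz0, hz00⟩ := hfeas
    have h1 := hmin z0 hz0
    rw [hz00, mul_zero, add_zero] at h1
    have h2 : ω ≤ ω * (z ⬝ᵥ C.mulVec z) := by
      have := mul_le_mul_of_nonneg_left (hq1 z hz hne) (le_of_lt hωpos)
      linarith
    have h3 : c ⬝ᵥ z0 - c ⬝ᵥ z ≤ ∑ i, |c i| := hdiff z hz z0 hz0
    linarith
  refine ⟨part1, ?_⟩
  obtain ⟨zs, hzs, hmin⟩ := Z.exists_min_image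
    (fun z => c ⬝ᵥ z + ω * (z ⬝ᵥ C.mulVec z)) hZ
  have hqzs : zs ⬝ᵥ C.mulVec zs = 0 := part1 zs hzs hmin
  have hinf : (Z.inf' hZ fun z => c ⬝ᵥ z + ω * (z ⬝ᵥ C.mulVec z)) = c ⬝ᵥ zs := by
    refine le_antisymm ?_ ?_
    · have := Finset.inf'_le (fun z => c ⬝ᵥ z + ω * (z ⬝ᵥ C.mulVec z)) hzs
      rw [hqzs, mul_zero, add_zero] at this
      exact this
    · rw [show c ⬝ᵥ zs = c ⬝ᵥ zs + ω * (zs ⬝ᵥ C.mulVec zs) by rw [hqzs, mul_zero, add_zero]]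
      exact Finset.le_inf' hZ _ hmin
  rw [hinf]
  have hmem : c ⬝ᵥ zs ∈ {v : ℝ | ∃ z ∈ Z, z ⬝ᵥ C.mulVec z = 0 ∧ v = c ⬝ᵥ z} :=
    ⟨zs, hzs, hqzs, rfl⟩
  have hlb : ∀ v ∈ {v : ℝ | ∃ z ∈ Z, z ⬝ᵥ C.mulVec z = 0 ∧ v = c ⬝ᵥ z}, c ⬝ᵥ zs ≤ v := by
    rintro v ⟨z, hz, hqz, rfl⟩
    have := hmin z hz
    rw [hqz, hqzs] at this
    simpa using this
  exact le_antisymm (le_csInf ⟨_, hmem⟩ hlb) (csInf_le ⟨_, hlb⟩ hmem)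
end

section
/- Generalized pricing optimality criterion: let v(MP) be the optimal value of the master problem over all paths and v(RMP) over a restricted path set. Let ẑ be feasible for RMP with value v̂, and λ ≥ 0. If for every agent a, min_{p ∈ P̄_a} c̄_p(λ) - min_{p ∈ P_a} c̄_p(λ) ≥ v̂ - L(λ), then v(RMP) = v(MP). Equivalently, if v(RMP) ≠ v(MP), there exists an agent a with min_{p ∈ P̄_a} c̄_p(λ) - min_{p ∈ P_a} c̄_p(λ) < v̂ - L(λ). -/
open Matrix Finset

/-- Generalized pricing optimality criterion. If for every agent
`a` the minimal reduced cost over the excluded paths minus the minimal reduced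
cost over the included paths is at least `v̂ - L(λ)`, then the restricted
master problem and the master problem have the same optimal value. -/
theorem pricing_optimality_criterion {A ρ : Type*}
    [Fintype A] [Fintype ρ] [DecidableEq ρ] [DecidableEq A] {m : ℕ}
    (agent : ρ → A) (c : ρ → ℝ) (D : Matrix (Fin m) ρ ℝ)
    (hD : ∀ i p, 0 ≤ D i p) (Psub : Finset ρ)
    (hPa : ∀ a : A, (Psub.filter (fun p => agent p = a)).Nonempty)
    (hPbar : ∀ a : A, (Psubᶜ.filter (fun p => agent p = a)).Nonempty)
    (lam : Fin m → ℝ) (hlam : ∀ i, 0 ≤ lam i)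
    (zhat : ρ → ℝ) (hzbin : ∀ p, zhat p = 0 ∨ zhat p = 1)
    (hzsupp : ∀ p, p ∉ Psub → zhat p = 0)
    (hzone : ∀ a : A, ∑ p ∈ univ.filter (fun p => agent p = a), zhat p = 1)
    (hzfeas : ∀ i, D.mulVec zhat i ≤ 1)
    (hcrit : ∀ a : A,
      ((Psubᶜ.filter (fun p => agent p = a)).inf' (hPbar a)
          (fun p => c p + ∑ i, lam i * D i p)) -
        ((Psub.filter (fun p => agent p = a)).inf' (hPa a)
          (fun p => c p + ∑ i, lam i * D i p)) ≥
      (∑ p, c p * zhat p) -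
        ((∑ a' : A, (Psub.filter (fun p => agent p = a')).inf' (hPa a')
            (fun p => c p + ∑ i, lam i * D i p)) - ∑ i, lam i)) :
    sInf {v : ℝ | ∃ z : ρ → ℝ, (∀ p, z p = 0 ∨ z p = 1) ∧
        (∀ p, p ∉ Psub → z p = 0) ∧
        (∀ a : A, ∑ p ∈ univ.filter (fun p => agent p = a), z p = 1) ∧
        (∀ i, D.mulVec z i ≤ 1) ∧ v = ∑ p, c p * z p} =
      sInf {v : ℝ | ∃ z : ρ → ℝ, (∀ p, z p = 0 ∨ z p = 1) ∧
        (∀ a : A, ∑ p ∈ univ.filter (fun p => agent p = a), z p = 1) ∧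
        (∀ i, D.mulVec z i ≤ 1) ∧ v = ∑ p, c p * z p} := by
  classical
  set cbar : ρ → ℝ := fun p => c p + ∑ i, lam i * D i p with hcbar
  set M : A → ℝ := fun a => (Psub.filter (fun p => agent p = a)).inf' (hPa a) cbar with hM
  set Mbar : A → ℝ := fun a => (Psubᶜ.filter (fun p => agent p = a)).inf' (hPbar a) cbar with hMbar
  set vhat : ℝ := ∑ p, c p * zhat p with hvhat
  set Lag : ℝ := (∑ a, M a) - ∑ i, lam i with hLag
  have hcrit' : ∀ a : A, Mbar a - M a ≥ vhat - Lag := hcrit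
  -- Lagrangian bound: for any feasible binary z, ∑ cbar z - ∑ lam ≤ ∑ c z
  have lagr : ∀ z : ρ → ℝ, (∀ p, z p = 0 ∨ z p = 1) → (∀ i, D.mulVec z i ≤ 1) →
      (∑ p, cbar p * z p) - ∑ i, lam i ≤ ∑ p, c p * z p := by
    intro z hb hf
    have h1 : ∑ p, cbar p * z p = (∑ p, c p * z p) + ∑ i, lam i * D.mulVec z i := by
      have hterm : ∀ p, cbar p * z p = c p * z p + ∑ i, lam i * (D i p * z p) := by
        intro p
        simp [hcbar, add_mul, Finset.sum_mul, mul_assoc]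
      rw [Finset.sum_congr rfl (fun p _ => hterm p), Finset.sum_add_distrib]
      congr 1
      rw [Finset.sum_comm]
      simp [Matrix.mulVec, dotProduct, Finset.mul_sum]
    have h2 : ∑ i, lam i * D.mulVec z i ≤ ∑ i, lam i := by
      apply Finset.sum_le_sum
      intro i _
      calc lam i * D.mulVec z i ≤ lam i * 1 :=
            mul_le_mul_of_nonneg_left (hf i) (hlam i)
        _ = lam i := mul_one _
    linarith
  -- fiberwise decomposition of ∑ cbar z
  have fib : ∀ z : ρ → ℝ, ∑ p, cbar p * z p
      = ∑ a, ∑ p ∈ univ.filter (fun p => agent p = a), cbar p * z p :=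
    fun z => (Finset.sum_fiberwise _ agent (fun p => cbar p * z p)).symm
  -- per-fiber lower bound when every selected path of the fiber lies in Psub
  have fiber_bound : ∀ (z : ρ → ℝ) (a : A), (∀ p, z p = 0 ∨ z p = 1) →
      (∀ p, agent p = a → z p = 1 → p ∈ Psub) →
      (∑ p ∈ univ.filter (fun p => agent p = a), z p = 1) →
      M a ≤ ∑ p ∈ univ.filter (fun p => agent p = a), cbar p * z p := by
    intro z a hb hsupp hone
    calc M a = M a * ∑ p ∈ univ.filter (fun p => agent p = a), z p := by
            rw [hone, mul_one]
      _ = ∑ p ∈ univ.filter (fun p => agent p = a), M a * z p := by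
            rw [Finset.mul_sum]
      _ ≤ ∑ p ∈ univ.filter (fun p => agent p = a), cbar p * z p := by
            apply Finset.sum_le_sum
            intro p hp
            rcases hb p with h0 | h1
            · simp [h0]
            · have hpa : agent p = a := (Finset.mem_filter.mp hp).2
              have hmem : p ∈ Psub.filter (fun p => agent p = a) :=
                Finset.mem_filter.mpr ⟨hsupp p hpa h1, hpa⟩
              rw [h1, mul_one, mul_one]
              exact Finset.inf'_le cbar hmem
  -- weak duality: Lag ≤ vhat
  have hLv : Lag ≤ vhat := by
    have h1 : (∑ p, cbar p * zhat p) - ∑ i, lam i ≤ vhat := lagr zhat hzbin hzfeas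
    have h2 : ∑ a, M a ≤ ∑ p, cbar p * zhat p := by
      rw [fib zhat]
      apply Finset.sum_le_sum
      intro a _
      exact fiber_bound zhat a hzbin
        (fun p _ h1 => by
          by_contra hns
          rw [hzsupp p hns] at h1
          exact zero_ne_one h1)
        (hzone a)
    rw [hLag]; linarith
  have hDelta : 0 ≤ vhat - Lag := by linarith
  -- consequence: M a ≤ Mbar a
  have hMle : ∀ a, M a ≤ Mbar a := by
    intro a; have := hcrit' a; linarith
  -- the two feasible-value sets
  set SR : Set ℝ := {v : ℝ | ∃ z : ρ → ℝ, (∀ p, z p = 0 ∨ z p = 1) ∧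
      (∀ p, p ∉ Psub → z p = 0) ∧
      (∀ a : A, ∑ p ∈ univ.filter (fun p => agent p = a), z p = 1) ∧
      (∀ i, D.mulVec z i ≤ 1) ∧ v = ∑ p, c p * z p} with hSR
  set SM : Set ℝ := {v : ℝ | ∃ z : ρ → ℝ, (∀ p, z p = 0 ∨ z p = 1) ∧
      (∀ a : A, ∑ p ∈ univ.filter (fun p => agent p = a), z p = 1) ∧
      (∀ i, D.mulVec z i ≤ 1) ∧ v = ∑ p, c p * z p} with hSM
  have hsub : SR ⊆ SM := by
    rintro v ⟨z, hb, _, hone, hfeas, hv⟩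
    exact ⟨z, hb, hone, hfeas, hv⟩
  have hvhatSR : vhat ∈ SR := ⟨zhat, hzbin, hzsupp, hzone, hzfeas, rfl⟩
  have hSRne : SR.Nonempty := ⟨vhat, hvhatSR⟩
  have hbddM : BddBelow SM := by
    refine ⟨-∑ p, |c p|, ?_⟩
    rintro v ⟨z, hb, _, _, hv⟩
    rw [hv]
    have : ∑ p, -|c p| ≤ ∑ p, c p * z p := by
      apply Finset.sum_le_sum
      intro p _
      rcases hb p with h | h
      · simp [h]
      · rw [h, mul_one]; exact neg_abs_le _
    simpa using this
  have hbddR : BddBelow SR := hbddM.mono hsub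
  -- key: any MP value using a path outside Psub is ≥ vhat
  have key : ∀ v ∈ SM, vhat ≤ v ∨ v ∈ SR := by
    rintro v ⟨z, hb, hone, hfeas, hv⟩
    by_cases hs : ∀ p, p ∉ Psub → z p = 0
    · exact Or.inr ⟨z, hb, hs, hone, hfeas, hv⟩
    left
    push_neg at hs
    obtain ⟨p0, hp0, hz0⟩ := hs
    have hz1 : z p0 = 1 := (hb p0).resolve_left hz0
    set a0 := agent p0 with ha0
    have hz0nn : ∀ p, 0 ≤ z p := fun p => by rcases hb p with h | h <;> simp [h]
    -- all other paths in the fiber of a0 have z = 0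
    have hp0mem : p0 ∈ univ.filter (fun p => agent p = a0) := by simp [ha0]
    have hrest : ∀ q ∈ (univ.filter (fun p => agent p = a0)).erase p0, z q = 0 := by
      have hsum := Finset.add_sum_erase _ z hp0mem
      rw [hone a0, hz1] at hsum
      have hzero : ∑ q ∈ (univ.filter (fun p => agent p = a0)).erase p0, z q = 0 := by
        linarith
      intro q hq
      exact (Finset.sum_eq_zero_iff_of_nonneg (fun q _ => hz0nn q)).mp hzero q hq
    -- fiber sum at a0 equals cbar p0
    have hfa0 : ∑ p ∈ univ.filter (fun p => agent p = a0), cbar p * z p = cbar p0 := by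
      rw [← Finset.add_sum_erase _ _ hp0mem, hz1, mul_one]
      have : ∑ q ∈ (univ.filter (fun p => agent p = a0)).erase p0, cbar q * z q = 0 :=
        Finset.sum_eq_zero (fun q hq => by rw [hrest q hq, mul_zero])
      rw [this, add_zero]
    have hcbarp0 : Mbar a0 ≤ cbar p0 := by
      apply Finset.inf'_le
      exact Finset.mem_filter.mpr ⟨Finset.mem_compl.mpr hp0, rfl⟩
    -- per-fiber bound for all a
    have hfibers : ∀ a, M a ≤ ∑ p ∈ univ.filter (fun p => agent p = a), cbar p * z p := by
      intro a
      calc M a = M a * ∑ p ∈ univ.filter (fun p => agent p = a), z p := by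
            rw [hone a, mul_one]
        _ = ∑ p ∈ univ.filter (fun p => agent p = a), M a * z p := by
            rw [Finset.mul_sum]
        _ ≤ ∑ p ∈ univ.filter (fun p => agent p = a), cbar p * z p := by
            apply Finset.sum_le_sum
            intro p hp
            rcases hb p with h0 | h1
            · simp [h0]
            · have hpa : agent p = a := (Finset.mem_filter.mp hp).2
              rw [h1, mul_one, mul_one]
              by_cases hps : p ∈ Psub
              · exact Finset.inf'_le cbar (Finset.mem_filter.mpr ⟨hps, hpa⟩)
              · have : Mbar a ≤ cbar p := Finset.inf'_le cbar
                  (Finset.mem_filter.mpr ⟨Finset.mem_compl.mpr hps, hpa⟩)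
                linarith [hMle a]
    -- total: ∑ cbar z ≥ ∑ M a + (vhat - Lag)
    have htot : (∑ a, M a) + (vhat - Lag) ≤ ∑ p, cbar p * z p := by
      rw [fib z]
      have hsplit : ∑ a, ∑ p ∈ univ.filter (fun p => agent p = a), cbar p * z p
          = (∑ p ∈ univ.filter (fun p => agent p = a0), cbar p * z p)
            + ∑ a ∈ univ.erase a0, ∑ p ∈ univ.filter (fun p => agent p = a), cbar p * z p :=
        (Finset.add_sum_erase _ _ (Finset.mem_univ a0)).symm
      have hMsplit : (∑ a, M a) = M a0 + ∑ a ∈ univ.erase a0, M a :=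
        (Finset.add_sum_erase _ _ (Finset.mem_univ a0)).symm
      rw [hsplit, hMsplit]
      have h1 : M a0 + (vhat - Lag) ≤ ∑ p ∈ univ.filter (fun p => agent p = a0), cbar p * z p := by
        rw [hfa0]
        have := hcrit' a0
        linarith
      have h2 : ∑ a ∈ univ.erase a0, M a
          ≤ ∑ a ∈ univ.erase a0, ∑ p ∈ univ.filter (fun p => agent p = a), cbar p * z p :=
        Finset.sum_le_sum (fun a _ => hfibers a)
      linarith
    have hlz := lagr z hb hfeas
    rw [hv]
    linarith
  -- assemble
  apply le_antisymm
  · apply le_csInf (hSRne.mono hsub)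
    intro v hvM
    rcases key v hvM with h | h
    · calc sInf SR ≤ vhat := csInf_le hbddR hvhatSR
        _ ≤ v := h
    · exact csInf_le hbddR h
  · exact csInf_le_csInf hbddM hSRne hsub
end

section
/- Exactness of the slack-variable QUBO: let ω > ‖c‖₁ and suppose there exists z ∈ Z with D z ≤ 1 where D is binary. Then min over (z,s) ∈ Z × {0,1}^m of c^T z + ω‖D z − 1 + s‖² equals min over {z ∈ Z : D z ≤ 1} of c^T z, and every minimizing z is feasible (D z ≤ 1). -/
open Matrix

/-- Exactness of the slack-variable QUBO formulation. -/
theorem slack_qubo_exact {n m : ℕ}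
    (Z : Finset (Fin n → ℝ)) (hZ : Z.Nonempty)
    (hbin : ∀ z ∈ Z, ∀ i, z i = 0 ∨ z i = 1)
    (c : Fin n → ℝ) (D : Matrix (Fin m) (Fin n) ℝ)
    (hD : ∀ i j, D i j = 0 ∨ D i j = 1)
    (ω : ℝ) (hω : ω > ∑ i, |c i|)
    (hfeas : ∃ z ∈ Z, ∀ i, D.mulVec z i ≤ 1) :
    sInf {v : ℝ | ∃ z ∈ Z, ∃ s : Fin m → ℝ, (∀ i, s i = 0 ∨ s i = 1) ∧
        v = c ⬝ᵥ z + ω * ∑ i, (D.mulVec z i - 1 + s i) ^ 2} =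
      sInf {v : ℝ | ∃ z ∈ Z, (∀ i, D.mulVec z i ≤ 1) ∧ v = c ⬝ᵥ z} ∧
    ∀ z ∈ Z, ∀ s : Fin m → ℝ, (∀ i, s i = 0 ∨ s i = 1) →
      (∀ z' ∈ Z, ∀ s' : Fin m → ℝ, (∀ i, s' i = 0 ∨ s' i = 1) →
        c ⬝ᵥ z + ω * ∑ i, (D.mulVec z i - 1 + s i) ^ 2 ≤
          c ⬝ᵥ z' + ω * ∑ i, (D.mulVec z' i - 1 + s' i) ^ 2) →
      ∀ i, D.mulVec z i ≤ 1 := by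
  classical
  set B := ∑ i, |c i| with hBdef
  have hB0 : 0 ≤ B := Finset.sum_nonneg fun i _ => abs_nonneg _
  have hω0 : 0 < ω := lt_of_le_of_lt hB0 hω
  -- bound on the linear objective for binary vectors
  have hdot : ∀ z ∈ Z, |c ⬝ᵥ z| ≤ B := by
    intro z hz
    calc |c ⬝ᵥ z| = |∑ i, c i * z i| := by simp [dotProduct]
      _ ≤ ∑ i, |c i * z i| := Finset.abs_sum_le_sum_abs _ _
      _ ≤ B := Finset.sum_le_sum fun i _ => by
          rcases hbin z hz i with h | h <;> simp [h, abs_nonneg]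
  have hdiff : ∀ z ∈ Z, ∀ z' ∈ Z, |c ⬝ᵥ z - c ⬝ᵥ z'| ≤ B := by
    intro z hz z' hz'
    calc |c ⬝ᵥ z - c ⬝ᵥ z'| = |∑ i, (c i * z i - c i * z' i)| := by
          simp [dotProduct, Finset.sum_sub_distrib]
      _ ≤ ∑ i, |c i * z i - c i * z' i| := Finset.abs_sum_le_sum_abs _ _
      _ ≤ B := Finset.sum_le_sum fun i _ => by
          rcases hbin z hz i with h | h <;> rcases hbin z' hz' i with h' | h' <;>
            simp [h, h', abs_nonneg]
  -- D z i is a natural number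
  have hnat : ∀ z ∈ Z, ∀ i, ∃ k : ℕ, D.mulVec z i = k := by
    intro z hz i
    refine ⟨∑ j, if D i j * z j = 1 then 1 else 0, ?_⟩
    simp only [Matrix.mulVec, dotProduct]
    push_cast
    refine Finset.sum_congr rfl fun j _ => ?_
    rcases hD i j with h | h <;> rcases hbin z hz j with h' | h' <;> norm_num [h, h']
  -- feasible points admit binary slacks making the penalty zero
  have hslack : ∀ z ∈ Z, (∀ i, D.mulVec z i ≤ 1) →
      ∃ s : Fin m → ℝ, (∀ i, s i = 0 ∨ s i = 1) ∧ ∀ i, D.mulVec z i - 1 + s i = 0 := by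
    intro z hz hfz
    refine ⟨fun i => 1 - D.mulVec z i, fun i => ?_, fun i => by ring⟩
    obtain ⟨k, hk⟩ := hnat z hz i
    have h1 := hfz i
    dsimp only
    rw [hk] at h1 ⊢
    have hk1 : k ≤ 1 := by exact_mod_cast h1
    interval_cases k <;> norm_num
  have hpen : ∀ (z : Fin n → ℝ) (s : Fin m → ℝ),
      0 ≤ ∑ i, (D.mulVec z i - 1 + s i) ^ 2 :=
    fun z s => Finset.sum_nonneg fun i _ => sq_nonneg _
  -- infeasible points have penalty at least 1
  have hinf : ∀ z ∈ Z, ∀ s : Fin m → ℝ, (∀ i, s i = 0 ∨ s i = 1) →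
      ∀ i, ¬ D.mulVec z i ≤ 1 → 1 ≤ ∑ i, (D.mulVec z i - 1 + s i) ^ 2 := by
    intro z hz s hs i hi
    have h1 : 1 ≤ (D.mulVec z i - 1 + s i) ^ 2 := by
      obtain ⟨k, hk⟩ := hnat z hz i
      have hk2 : 2 ≤ k := by
        by_contra h
        push_neg at h
        interval_cases k <;> (rw [hk] at hi; norm_num at hi)
      have hs0 : 0 ≤ s i := by rcases hs i with h | h <;> simp [h]
      have hk2' : (2:ℝ) ≤ k := by exact_mod_cast hk2
      have hge : 1 ≤ D.mulVec z i - 1 + s i := by rw [hk]; linarith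
      nlinarith
    calc (1:ℝ) ≤ (D.mulVec z i - 1 + s i) ^ 2 := h1
      _ ≤ ∑ i, (D.mulVec z i - 1 + s i) ^ 2 :=
        Finset.single_le_sum (f := fun j => (D.mulVec z j - 1 + s j) ^ 2)
          (fun j _ => sq_nonneg _) (Finset.mem_univ i)
  set S := {v : ℝ | ∃ z ∈ Z, ∃ s : Fin m → ℝ, (∀ i, s i = 0 ∨ s i = 1) ∧
      v = c ⬝ᵥ z + ω * ∑ i, (D.mulVec z i - 1 + s i) ^ 2} with hSdef
  set F := {v : ℝ | ∃ z ∈ Z, (∀ i, D.mulVec z i ≤ 1) ∧ v = c ⬝ᵥ z} with hFdef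
  obtain ⟨z₀, hz₀, hz₀f⟩ := hfeas
  have hFne : F.Nonempty := ⟨c ⬝ᵥ z₀, z₀, hz₀, hz₀f, rfl⟩
  have hFbdd : BddBelow F := by
    refine ⟨-B, fun v hv => ?_⟩
    obtain ⟨z, hz, _, rfl⟩ := hv
    have := hdot z hz
    linarith [abs_le.mp this |>.1]
  have hFS : F ⊆ S := by
    intro v hv
    obtain ⟨z, hz, hzf, rfl⟩ := hv
    obtain ⟨s, hs, hs0⟩ := hslack z hz hzf
    refine ⟨z, hz, s, hs, ?_⟩
    have : ∑ i, (D.mulVec z i - 1 + s i) ^ 2 = 0 :=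
      Finset.sum_eq_zero fun i _ => by rw [hs0 i]; ring
    rw [this]; ring
  have hSne : S.Nonempty := hFne.mono hFS
  have hSbdd : BddBelow S := by
    refine ⟨-B, fun v hv => ?_⟩
    obtain ⟨z, hz, s, hs, rfl⟩ := hv
    have h1 := abs_le.mp (hdot z hz) |>.1
    have h2 := hpen z s
    nlinarith
  have hFz0 : sInf F ≤ c ⬝ᵥ z₀ := csInf_le hFbdd ⟨z₀, hz₀, hz₀f, rfl⟩
  have hlb : ∀ v ∈ S, sInf F ≤ v := by
    intro v hv
    obtain ⟨z, hz, s, hs, rfl⟩ := hv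
    by_cases hzf : ∀ i, D.mulVec z i ≤ 1
    · have h1 : sInf F ≤ c ⬝ᵥ z := csInf_le hFbdd ⟨z, hz, hzf, rfl⟩
      have h2 := hpen z s
      nlinarith
    · push_neg at hzf
      obtain ⟨i, hi⟩ := hzf
      have h1 := hinf z hz s hs i (not_le.mpr hi)
      have h2 := abs_le.mp (hdiff z hz z₀ hz₀) |>.1
      have h4 : ω * 1 ≤ ω * ∑ i, (D.mulVec z i - 1 + s i) ^ 2 :=
        mul_le_mul_of_nonneg_left h1 hω0.le
      linarith [hFz0]
  constructor
  · exact le_antisymm (csInf_le_csInf hSbdd hFne hFS) (le_csInf hSne hlb)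
  · intro z hz s hs hmin i
    by_contra hi
    obtain ⟨s₀, hs₀, hs₀0⟩ := hslack z₀ hz₀ hz₀f
    have hzero : ∑ i, (D.mulVec z₀ i - 1 + s₀ i) ^ 2 = 0 :=
      Finset.sum_eq_zero fun i _ => by rw [hs₀0 i]; ring
    have hle := hmin z₀ hz₀ s₀ hs₀
    rw [hzero] at hle
    have h1 := hinf z hz s hs i hi
    have h2 := abs_le.mp (hdiff z hz z₀ hz₀) |>.1
    have h4 : ω * 1 ≤ ω * ∑ i, (D.mulVec z i - 1 + s i) ^ 2 :=
      mul_le_mul_of_nonneg_left h1 hω0.le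
    linarith
end
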